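/- arXiv:1712.02740 — 2 statements merged into one kernel-verified Lean document; each statement's English description precedes it below -/
import Mathlib

section
/- Let $F : [0,\infty) \to [0,\infty)$ be concave with $F(0) = 0$, and define $R(s,t) = \frac{1}{2}(F(t) + F(s) - F(|t-s|))$. Then for all $0 \le t_1 \le t_2 \le t_3 \le t_4$, the rectangular increment $R_{t_1 t_2}^{t_3 t_4} := R(t_2, t_4) - R(t_2, t_3) - R(t_1, t_4) + R(t_1, t_3)$ is non-positive. -/
lemma concave_four (F : ℝ → ℝ) (hF : ConcaveOn ℝ (Set.Ici 0) F)
    (x y z w : ℝ) (hx : 0 ≤ x) (hxy : x ≤ y) (hyw : y ≤ w)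
    (hsum : x + w = y + z) : F x + F w ≤ F y + F z := by
  rcases eq_or_lt_of_le (hxy.trans hyw) with h | h
  · have hy : y = x := le_antisymm (h ▸ hyw) hxy
    have hz : z = w := by linarith
    rw [hy, hz]
  · set a : ℝ := (w - y) / (w - x) with ha
    have hwx : 0 < w - x := by linarith
    have ha0 : 0 ≤ a := div_nonneg (by linarith) hwx.le
    have ha1 : a ≤ 1 := by rw [ha, div_le_one hwx]; linarith
    have hxs : x ∈ Set.Ici (0:ℝ) := hx
    have hws : w ∈ Set.Ici (0:ℝ) := by simp only [Set.mem_Ici]; linarith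
    have haw : a * (w - x) = w - y := div_mul_cancel₀ _ hwx.ne'
    have hy' : a * x + (1 - a) * w = y := by linear_combination -haw
    have hz' : (1 - a) * x + a * w = z := by linear_combination haw + hsum
    have h1 := hF.2 hxs hws ha0 (by linarith : (0:ℝ) ≤ 1 - a) (by ring)
    have h2 := hF.2 hxs hws (by linarith : (0:ℝ) ≤ 1 - a) ha0 (by ring)
    simp only [smul_eq_mul] at h1 h2
    rw [hy'] at h1; rw [hz'] at h2
    linarith

/-- Non-positively correlated increments for covariances of the form
`R(s,t) = (F(t)+F(s)-F(|t-s|))/2` with `F` concave, `F(0)=0`, `F ≥ 0`: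
for `0 ≤ t₁ ≤ t₂ ≤ t₃ ≤ t₄`, `R(t₂,t₄) - R(t₂,t₃) - R(t₁,t₄) + R(t₁,t₃) ≤ 0`. -/
theorem stmt3 (F : ℝ → ℝ) (hF : ConcaveOn ℝ (Set.Ici 0) F) (hF0 : F 0 = 0)
    (hFnn : ∀ x ≥ (0 : ℝ), 0 ≤ F x)
    (R : ℝ → ℝ → ℝ) (hR : ∀ s t, R s t = (F t + F s - F |t - s|) / 2)
    (t₁ t₂ t₃ t₄ : ℝ) (h0 : 0 ≤ t₁) (h12 : t₁ ≤ t₂) (h23 : t₂ ≤ t₃) (h34 : t₃ ≤ t₄) :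
    R t₂ t₄ - R t₂ t₃ - R t₁ t₄ + R t₁ t₃ ≤ 0 := by
  rw [hR, hR, hR, hR]
  rw [abs_of_nonneg (by linarith : (0:ℝ) ≤ t₄ - t₂),
    abs_of_nonneg (by linarith : (0:ℝ) ≤ t₃ - t₂),
    abs_of_nonneg (by linarith : (0:ℝ) ≤ t₄ - t₁),
    abs_of_nonneg (by linarith : (0:ℝ) ≤ t₃ - t₁)]
  have key := concave_four F hF (t₃ - t₂) (t₃ - t₁) (t₄ - t₂) (t₄ - t₁)
    (by linarith) (by linarith) (by linarith) (by ring)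
  linarith
end

section
/- Let $K(t) = \sum_{k=1}^{\infty} \alpha_k^2 \cos(kt)$ with $\alpha_k^2 = C k^{-(1 + 1/\rho)}$ for some $C > 0$ and $\rho \in [1,2)$, and set $F(t) = 2(K(0) - K(t)) = 2\sum_{k=1}^\infty \alpha_k^2 (1 - \cos(kt))$. Then there exist constants $c > 0$ and $t_0 > 0$ such that $F(t) \ge c\, t^{1/\rho}$ for all $t \in (0, t_0]$. -/
set_option maxHeartbeats 1000000 in
/-- Lower bound for the increment variance of the random Fourier series with
`αₖ² = C k^{-(1+1/ρ)}`: there exist `c > 0`, `t₀ > 0` with `F(t) ≥ c t^{1/ρ}`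
for `t ∈ (0, t₀]`, where `F(t) = 2 ∑ₖ αₖ² (1 - cos(kt))`. -/
theorem stmt9 (C ρ : ℝ) (hC : 0 < C) (hρ : ρ ∈ Set.Ico (1 : ℝ) 2)
    (a2 : ℕ → ℝ) (ha : ∀ k : ℕ, 1 ≤ k → a2 k = C * (k : ℝ) ^ (-(1 + 1 / ρ)))
    (F : ℝ → ℝ)
    (hF : ∀ t, F t = 2 * ∑' k : ℕ, a2 (k + 1) * (1 - Real.cos ((k + 1 : ℕ) * t))) :
    ∃ c > (0 : ℝ), ∃ t₀ > (0 : ℝ), ∀ t ∈ Set.Ioc 0 t₀, c * t ^ (1 / ρ) ≤ F t := by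
  obtain ⟨hρ1, hρ2⟩ := hρ
  have hρ0 : (0:ℝ) < ρ := by linarith
  have hinv0 : 0 < 1/ρ := by positivity
  have hinv1 : 1/ρ ≤ 1 := by rw [div_le_one hρ0]; exact hρ1
  have hπ : (3:ℝ) < Real.pi := Real.pi_gt_three
  have hcos : Real.cos (1/2) < 1 := by
    have := Real.cos_lt_cos_of_nonneg_of_le_pi (le_refl (0:ℝ)) (by linarith : (1:ℝ)/2 ≤ Real.pi)
      (by norm_num : (0:ℝ) < 1/2)
    simpa [Real.cos_zero] using this
  refine ⟨C * (1 - Real.cos (1/2)) / 2, by nlinarith, 1/2, by norm_num, ?_⟩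
  rintro t ⟨ht0, ht2⟩
  -- nonnegativity of the terms
  have ha2nn : ∀ j : ℕ, 0 ≤ a2 (j+1) := by
    intro j
    rw [ha (j+1) (by omega)]
    positivity
  have hnonneg : ∀ j : ℕ, 0 ≤ a2 (j+1) * (1 - Real.cos ((j+1 : ℕ) * t)) := by
    intro j
    have := Real.cos_le_one ((j+1 : ℕ) * t)
    have := ha2nn j
    nlinarith
  -- summability
  have hsum : Summable (fun j : ℕ => a2 (j+1) * (1 - Real.cos ((j+1 : ℕ) * t))) := by
    have h1 : Summable (fun j : ℕ => (j:ℝ) ^ (-(1 + 1/ρ))) :=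
      Real.summable_nat_rpow.mpr (by linarith)
    have h2 : Summable (fun j : ℕ => ((j+1 : ℕ):ℝ) ^ (-(1 + 1/ρ))) :=
      (summable_nat_add_iff 1).mpr h1
    refine Summable.of_nonneg_of_le hnonneg (fun j => ?_) (h2.mul_left (2*C))
    rw [ha (j+1) (by omega)]
    have hc1 := Real.neg_one_le_cos ((j+1 : ℕ) * t)
    have hr : (0:ℝ) ≤ ((j+1 : ℕ):ℝ) ^ (-(1 + 1/ρ)) := Real.rpow_nonneg (by positivity) _
    have hCx : (0:ℝ) ≤ C * ((j+1 : ℕ):ℝ) ^ (-(1 + 1/ρ)) := mul_nonneg hC.le hr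
    calc C * ((j+1 : ℕ):ℝ) ^ (-(1 + 1/ρ)) * (1 - Real.cos ((j+1 : ℕ) * t))
        ≤ C * ((j+1 : ℕ):ℝ) ^ (-(1 + 1/ρ)) * 2 :=
          mul_le_mul_of_nonneg_left (by linarith) hCx
      _ = 2 * C * ((j+1 : ℕ):ℝ) ^ (-(1 + 1/ρ)) := by ring
  -- the index window
  set n : ℕ := ⌈1/(2*t)⌉₊ with hn
  set m : ℕ := ⌊2/t⌋₊ with hm
  have hn1 : 1 ≤ n := Nat.one_le_ceil_iff.mpr (by positivity)
  have hnub : (n:ℝ) ≤ 1/(2*t) + 1 := (Nat.ceil_lt_add_one (by positivity)).le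
  have hnlb : 1/(2*t) ≤ (n:ℝ) := Nat.le_ceil _
  have hmub : (m:ℝ) ≤ 2/t := Nat.floor_le (by positivity)
  have hmlb : 2/t - 1 < (m:ℝ) := Nat.sub_one_lt_floor _
  have h32 : 1/(2*t) + 1 ≤ 2/t - 1 := by
    have e : 2/t - 1 - (1/(2*t) + 1) = (3 - 4*t)/(2*t) := by field_simp; ring
    have : (0:ℝ) ≤ (3 - 4*t)/(2*t) := div_nonneg (by linarith) (by positivity)
    linarith
  have hnm : n ≤ m := by
    have : (n:ℝ) ≤ (m:ℝ) := by linarith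
    exact_mod_cast this
  -- pointwise lower bound on the window
  have hterm : ∀ j ∈ Finset.Icc (n-1) (m-1),
      C * (2/t) ^ (-(1 + 1/ρ)) * (1 - Real.cos (1/2))
        ≤ a2 (j+1) * (1 - Real.cos ((j+1 : ℕ) * t)) := by
    intro j hj
    rw [Finset.mem_Icc] at hj
    have hjn : n ≤ j + 1 := by omega
    have hjm : j + 1 ≤ m := by omega
    have hklb : 1/(2*t) ≤ ((j+1 : ℕ):ℝ) := le_trans hnlb (by exact_mod_cast hjn)
    have hkub : ((j+1 : ℕ):ℝ) ≤ 2/t := le_trans (by exact_mod_cast hjm) hmub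
    have hk0 : (0:ℝ) < ((j+1 : ℕ):ℝ) := by positivity
    have hkt1 : 1/2 ≤ ((j+1 : ℕ):ℝ) * t := by
      rw [div_le_iff₀ (by positivity : (0:ℝ) < 2*t)] at hklb
      nlinarith
    have hkt2 : ((j+1 : ℕ):ℝ) * t ≤ 2 := by
      have hkub' := hkub
      rw [le_div_iff₀ ht0] at hkub'
      linarith
    have hcosb : Real.cos (((j+1 : ℕ):ℝ) * t) ≤ Real.cos (1/2) :=
      Real.cos_le_cos_of_nonneg_of_le_pi (by norm_num) (by linarith) hkt1
    have hrpow : (2/t) ^ (-(1 + 1/ρ)) ≤ ((j+1 : ℕ):ℝ) ^ (-(1 + 1/ρ)) :=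
      Real.rpow_le_rpow_of_nonpos hk0 hkub (by linarith)
    rw [ha (j+1) (by omega)]
    have h1 : 1 - Real.cos (1/2) ≤ 1 - Real.cos (((j+1 : ℕ):ℝ) * t) := by linarith
    have h2 : (0:ℝ) ≤ (2/t) ^ (-(1 + 1/ρ)) := Real.rpow_nonneg (by positivity) _
    have h3 : (0:ℝ) ≤ 1 - Real.cos (1/2) := by linarith
    have hCx2 : (0:ℝ) ≤ C * ((j+1 : ℕ):ℝ) ^ (-(1 + 1/ρ)) :=
      mul_nonneg hC.le (Real.rpow_nonneg hk0.le _)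
    calc C * (2/t) ^ (-(1 + 1/ρ)) * (1 - Real.cos (1/2))
        ≤ C * ((j+1 : ℕ):ℝ) ^ (-(1 + 1/ρ)) * (1 - Real.cos (1/2)) := by
          apply mul_le_mul_of_nonneg_right _ h3
          exact mul_le_mul_of_nonneg_left hrpow hC.le
      _ ≤ C * ((j+1 : ℕ):ℝ) ^ (-(1 + 1/ρ)) * (1 - Real.cos (((j+1 : ℕ):ℝ) * t)) :=
          mul_le_mul_of_nonneg_left h1 hCx2
  -- sum lower bound
  have hcard : ((Finset.Icc (n-1) (m-1)).card : ℝ) = (m:ℝ) - n + 1 := by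
    rw [Nat.card_Icc]
    have : m - 1 + 1 - (n - 1) = m - n + 1 := by omega
    rw [this]
    push_cast [Nat.cast_sub hnm]
    ring
  have hcard_lb : 1/t ≤ ((Finset.Icc (n-1) (m-1)).card : ℝ) := by
    rw [hcard]
    have h5 : 1/t ≤ 3/(2*t) - 1 := by
      rw [div_sub' (by positivity : (2*t) ≠ 0), div_le_div_iff₀ ht0 (by positivity)]
      nlinarith
    have e2 : 3/(2*t) = 2/t - 1/(2*t) := by field_simp; ring
    linarith
  have hfin : ((Finset.Icc (n-1) (m-1)).card : ℝ) * (C * (2/t) ^ (-(1 + 1/ρ)) * (1 - Real.cos (1/2)))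
      ≤ ∑ j ∈ Finset.Icc (n-1) (m-1), a2 (j+1) * (1 - Real.cos ((j+1 : ℕ) * t)) := by
    have := Finset.sum_le_sum hterm
    simpa [Finset.sum_const, nsmul_eq_mul] using this
  have htsum : (∑ j ∈ Finset.Icc (n-1) (m-1), a2 (j+1) * (1 - Real.cos ((j+1 : ℕ) * t)))
      ≤ ∑' j : ℕ, a2 (j+1) * (1 - Real.cos ((j+1 : ℕ) * t)) :=
    Summable.sum_le_tsum _ (fun i _ => hnonneg i) hsum
  -- rpow algebra
  have hrpoweq : (2/t) ^ (-(1 + 1/ρ)) = (t/2) ^ ((1:ℝ) + 1/ρ) := by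
    rw [Real.rpow_neg (by positivity), ← Real.inv_rpow (by positivity)]
    norm_num
  have hsplit : (t/2) ^ ((1:ℝ) + 1/ρ) = (t/2) * ((t/2) ^ (1/ρ)) := by
    rw [Real.rpow_add (by positivity), Real.rpow_one]
  have h2rpow : (2:ℝ) ^ (1/ρ) ≤ 2 := by
    calc (2:ℝ) ^ (1/ρ) ≤ (2:ℝ) ^ (1:ℝ) :=
        Real.rpow_le_rpow_of_exponent_le (by norm_num) hinv1
      _ = 2 := Real.rpow_one 2
  have hdivpow : (t/2) ^ (1/ρ) = t ^ (1/ρ) / (2:ℝ) ^ (1/ρ) :=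
    Real.div_rpow ht0.le (by norm_num : (0:ℝ) ≤ 2) (1/ρ)
  have htp0 : (0:ℝ) < t ^ (1/ρ) := Real.rpow_pos_of_pos ht0 _
  have h2p0 : (0:ℝ) < (2:ℝ) ^ (1/ρ) := Real.rpow_pos_of_pos (by norm_num) _
  have hhalf : t ^ (1/ρ) / 2 ≤ (t/2) ^ (1/ρ) := by
    rw [hdivpow]
    apply div_le_div_of_nonneg_left htp0.le h2p0 h2rpow
  -- put it together
  have key : (1/t) * (C * (2/t) ^ (-(1 + 1/ρ)) * (1 - Real.cos (1/2)))
      ≤ ((Finset.Icc (n-1) (m-1)).card : ℝ) * (C * (2/t) ^ (-(1 + 1/ρ)) * (1 - Real.cos (1/2))) := by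
    apply mul_le_mul_of_nonneg_right hcard_lb
    have h6 : (0:ℝ) ≤ (2/t) ^ (-(1 + 1/ρ)) := Real.rpow_nonneg (by positivity) _
    exact mul_nonneg (mul_nonneg hC.le h6) (by linarith)
  have hlhs : C * (1 - Real.cos (1/2)) / 2 * t ^ (1/ρ) / 2
      ≤ (1/t) * (C * (2/t) ^ (-(1 + 1/ρ)) * (1 - Real.cos (1/2))) := by
    rw [hrpoweq, hsplit]
    have e1 : (1/t) * (C * ((t/2) * ((t/2) ^ (1/ρ))) * (1 - Real.cos (1/2)))
        = C * (1 - Real.cos (1/2)) / 2 * ((t/2) ^ (1/ρ)) := by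
      field_simp
    rw [e1]
    have hc0 : (0:ℝ) ≤ C * (1 - Real.cos (1/2)) / 2 := by nlinarith
    have := mul_le_mul_of_nonneg_left hhalf hc0
    calc C * (1 - Real.cos (1/2)) / 2 * t ^ (1/ρ) / 2
        = C * (1 - Real.cos (1/2)) / 2 * (t ^ (1/ρ) / 2) := by ring
      _ ≤ C * (1 - Real.cos (1/2)) / 2 * ((t/2) ^ (1/ρ)) := this
  rw [hF t]
  have : C * (1 - Real.cos (1/2)) / 2 * t ^ (1/ρ) / 2
      ≤ ∑' j : ℕ, a2 (j+1) * (1 - Real.cos ((j+1 : ℕ) * t)) := by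
    linarith
  linarith
end
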